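/- Let M, N, P, Q be matroids with finite ground sets S, T, U, V respectively, with S disjoint from T and U disjoint from V, and suppose |S| = |U| and the free product M □ N is isomorphic to the free product P □ Q. Then M is isomorphic to P and N is isomorphic to Q. -/

import Mathlib

/-!
Put `S = M.E`. The rank function of `L = M □ N` satisfies
`r X = min (r (X ∩ S) + |X \ S|) (r (X ∪ S))`, i.e. `S` is a *free factor* of `L`, and `M`, `N`
are recovered from `L` and `S` as the restriction `L ↾ S` and the contraction `L ／ S`.
Pulling `P.E` back along the isomorphism `L ≅ L'` gives a second free factor `U` of `L` with
`|U| = |S|`. Playing the two free-factor identities against each other shows that `r X` depends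
only on `X ∩ S ∩ U`, on `X \ (S ∪ U)` and on the two numbers `|X ∩ (S \ U)|`, `|X ∩ (U \ S)|`,
and not on their order. Hence an involution exchanging `S \ U` with `U \ S` and fixing everything
else is an automorphism of `L` carrying `S` to `U`; followed by `L ≅ L'` it carries `M.E` onto
`P.E`, and so induces `M ≅ P` on the restrictions and `N ≅ Q` on the contractions.
-/

open Set Matroid

/-- The rank of a set `X` in a matroid `M`: the maximum cardinality of an
independent subset of `X`.  For `X = M.E` this is the rank of `M`. -/
noncomputable def mrk {α : Type*} (M : Matroid α) (X : Set α) : ℕ :=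
  sSup (Set.ncard '' {I | M.Indep I ∧ I ⊆ X})

/-- Two matroids are isomorphic if there is a bijection between their ground sets
carrying independent sets to independent sets in both directions. -/
def MatroidIso {α β : Type*} (M : Matroid α) (N : Matroid β) : Prop :=
  ∃ e : M.E ≃ N.E, ∀ I : Set M.E,
    M.Indep ((↑) '' I) ↔ N.Indep ((↑) '' (e '' I))

section

variable {α β : Type*}

lemma ncard_sdiff_comm {S U : Set α} (hS : S.Finite) (hU : U.Finite) (h : S.ncard = U.ncard) :
    (S \ U).ncard = (U \ S).ncard := by
  have hS' := ncard_inter_add_ncard_sdiff_eq_ncard S U hS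
  have hU' := ncard_inter_add_ncard_sdiff_eq_ncard U S hU
  rw [inter_comm] at hU'
  omega

lemma exists_involutive_swap {P Q : Set α} (hP : P.Finite) (hQ : Q.Finite) (hPQ : Disjoint P Q)
    (h : P.ncard = Q.ncard) :
    ∃ σ : α → α, σ.Involutive ∧ MapsTo σ P Q ∧ MapsTo σ Q P ∧ EqOn σ id (P ∪ Q)ᶜ := by
  classical
  rcases isEmpty_or_nonempty α with hα | hα
  · exact ⟨id, fun _ => rfl, fun x => isEmptyElim x, fun x => isEmptyElim x, fun _ _ => rfl⟩
  obtain ⟨g, hg⟩ :=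
    hP.exists_bijOn_of_encard_eq (t := Q) (by rw [← hP.cast_ncard_eq, ← hQ.cast_ncard_eq, h])
  have hinv := hg.invOn_invFunOn
  have hg' := hg.symm hinv.symm
  refine ⟨P.piecewise g (Q.piecewise (Function.invFunOn g P) id), fun x => ?_, fun x hx => ?_,
    fun x hx => ?_, fun x hx => ?_⟩
  · by_cases hxP : x ∈ P
    · have hgx := hg.mapsTo hxP
      simp [hxP, hgx, disjoint_right.mp hPQ hgx, hinv.1 hxP]
    by_cases hxQ : x ∈ Q
    · have hgx := hg'.mapsTo hxQ
      simp [hxP, hxQ, hgx, hinv.2 hxQ]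
    · simp [hxP, hxQ]
  · simpa [hx] using hg.mapsTo hx
  · simpa [hx, disjoint_right.mp hPQ hx] using hg'.mapsTo hx
  · rw [mem_compl_iff, mem_union, not_or] at hx
    simp [hx.1, hx.2]

section mrk

variable {M : Matroid α} [M.Finite] {I X Y : Set α}

lemma bddAbove_ncard_indep_subset (M : Matroid α) [M.Finite] (X : Set α) :
    BddAbove (ncard '' {I | M.Indep I ∧ I ⊆ X}) :=
  ⟨M.E.ncard, by rintro _ ⟨I, ⟨hI, -⟩, rfl⟩; exact ncard_le_ncard hI.subset_ground M.ground_finite⟩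

lemma Matroid.Indep.ncard_le_mrk (hI : M.Indep I) (hIX : I ⊆ X) : I.ncard ≤ mrk M X :=
  le_csSup (bddAbove_ncard_indep_subset M X) ⟨I, ⟨hI, hIX⟩, rfl⟩

lemma exists_indep_subset_ncard_eq_mrk (M : Matroid α) [M.Finite] (X : Set α) :
    ∃ I ⊆ X, M.Indep I ∧ I.ncard = mrk M X := by
  have hne : {I | M.Indep I ∧ I ⊆ X}.Nonempty := ⟨∅, M.empty_indep, empty_subset X⟩
  obtain ⟨I, ⟨hI, hIX⟩, hcard⟩ :=
    Nat.sSup_mem (hne.image ncard) (bddAbove_ncard_indep_subset M X)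
  exact ⟨I, hIX, hI, hcard⟩

lemma mrk_mono (hXY : X ⊆ Y) : mrk M X ≤ mrk M Y := by
  obtain ⟨I, hIX, hI, hcard⟩ := exists_indep_subset_ncard_eq_mrk M X
  exact hcard ▸ hI.ncard_le_mrk (hIX.trans hXY)

lemma mrk_le_mrk_ground (X : Set α) : mrk M X ≤ mrk M M.E := by
  obtain ⟨I, -, hI, hcard⟩ := exists_indep_subset_ncard_eq_mrk M X
  exact hcard ▸ hI.ncard_le_mrk hI.subset_ground

lemma mrk_le_ncard (hX : X.Finite) : mrk M X ≤ X.ncard := by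
  obtain ⟨I, hIX, -, hcard⟩ := exists_indep_subset_ncard_eq_mrk M X
  exact hcard ▸ ncard_le_ncard hIX hX

lemma indep_iff_mrk_eq_ncard (hI : I ⊆ M.E) : M.Indep I ↔ mrk M I = I.ncard := by
  refine ⟨fun h => (mrk_le_ncard (M.set_finite I)).antisymm (h.ncard_le_mrk subset_rfl),
    fun h => ?_⟩
  obtain ⟨J, hJI, hJ, hcard⟩ := exists_indep_subset_ncard_eq_mrk M I
  rwa [eq_of_subset_of_ncard_le hJI (by rw [hcard, h]) (M.set_finite I)] at hJ

end mrk

structure IsIsoMap (f : α → β) (L : Matroid α) (L' : Matroid β) : Prop where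
  bijOn : BijOn f L.E L'.E
  indep_iff : ∀ I ⊆ L.E, L.Indep I ↔ L'.Indep (f '' I)

namespace IsIsoMap

variable {L : Matroid α} {L' : Matroid β} {f : α → β} {X : Set α}

lemma comp {γ : Type*} {L'' : Matroid γ} {g : β → γ} (hg : IsIsoMap g L' L'')
    (hf : IsIsoMap f L L') : IsIsoMap (g ∘ f) L L'' :=
  ⟨hg.bijOn.comp hf.bijOn, fun I hI => by
    rw [hf.indep_iff I hI, hg.indep_iff _ (hf.bijOn.mapsTo.mono_left hI).image_subset,
      image_comp]⟩

lemma image_inter_preimage (hf : IsIsoMap f L L') {U : Set β} (hU : U ⊆ L'.E) :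
    f '' (L.E ∩ f ⁻¹' U) = U := by
  rw [Set.image_inter_preimage, hf.bijOn.image_eq, inter_eq_right.mpr hU]

lemma matroidIso (hf : IsIsoMap f L L') : MatroidIso L L' := by
  refine ⟨hf.bijOn.equiv f, fun I => ?_⟩
  have himage : (↑) '' (hf.bijOn.equiv f '' I) = f '' ((↑) '' I) := by
    simp only [image_image]; rfl
  rw [himage]
  exact hf.indep_iff _ (Subtype.coe_image_subset _ _)

variable [L.Finite] [L'.Finite]

lemma mrk_image (hf : IsIsoMap f L L') (hX : X ⊆ L.E) : mrk L' (f '' X) = mrk L X := by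
  have hinj : InjOn f X := hf.bijOn.injOn.mono hX
  apply le_antisymm
  · obtain ⟨J, hJX, hJ, hJcard⟩ := exists_indep_subset_ncard_eq_mrk L' (f '' X)
    obtain ⟨I, hIX, rfl⟩ := subset_image_iff.mp hJX
    rw [← hJcard, (hinj.mono hIX).ncard_image]
    exact ((hf.indep_iff I (hIX.trans hX)).mpr hJ).ncard_le_mrk hIX
  · obtain ⟨I, hIX, hI, hIcard⟩ := exists_indep_subset_ncard_eq_mrk L X
    rw [← hIcard, ← (hinj.mono hIX).ncard_image]
    exact ((hf.indep_iff I (hIX.trans hX)).mp hI).ncard_le_mrk (image_mono hIX)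

end IsIsoMap

lemma MatroidIso.exists_isIsoMap [Nonempty β] {M : Matroid α} {N : Matroid β}
    (h : MatroidIso M N) : ∃ f, IsIsoMap f M N := by
  classical
  obtain ⟨e, he⟩ := h
  set f : α → β := fun x => if hx : x ∈ M.E then e ⟨x, hx⟩ else Classical.arbitrary β
  have hf : ∀ x : M.E, f x = e x := fun x => dif_pos x.2
  have himage : ∀ I : Set M.E, f '' ((↑) '' I) = (↑) '' (e '' I) := by
    intro I
    simp only [image_image, hf]
  have hground : f '' M.E = N.E := by
    simpa [image_univ, e.surjective.range_eq] using himage univ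
  have hinj : InjOn f M.E := fun x hx y hy hxy => by
    rw [hf ⟨x, hx⟩, hf ⟨y, hy⟩] at hxy
    exact congrArg Subtype.val (e.injective (Subtype.ext hxy))
  refine ⟨f, hground ▸ hinj.bijOn_image, fun I hI => ?_⟩
  simpa only [← himage, Subtype.image_preimage_coe, inter_eq_right.mpr hI]
    using he (Subtype.val ⁻¹' I)

lemma MatroidIso.ground_eq_empty [IsEmpty β] {M : Matroid α} {N : Matroid β}
    (h : MatroidIso M N) : M.E = ∅ := by
  obtain ⟨e, -⟩ := h
  exact isEmpty_coe_sort.mp e.isEmpty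

lemma matroidIso_of_isEmpty [IsEmpty β] {M : Matroid α} {N : Matroid β} (hM : M.E = ∅) :
    MatroidIso M N := by
  have : IsEmpty M.E := isEmpty_coe_sort.mpr hM
  exact ⟨Equiv.equivOfIsEmpty _ _, fun I => by simp [eq_empty_of_isEmpty I]⟩

/-- `L` is the free product of `L ↾ S` and `L ／ S`, written through the rank function. -/
structure IsFreeFactor (L : Matroid α) (S : Set α) : Prop where
  subset_ground : S ⊆ L.E
  mrk_eq : ∀ X ⊆ L.E, mrk L X = min (mrk L (X ∩ S) + (X \ S).ncard) (mrk L (X ∪ S))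

namespace IsFreeFactor

variable {L : Matroid α} [L.Finite] {S U X Y Y' Z Z' R : Set α}

lemma mrk_union_of_subset_sdiff (hS : IsFreeFactor L S) (hU : IsFreeFactor L U)
    (hcard : S.ncard = U.ncard) (hX : X ⊆ S ∩ U) (hY : Y ⊆ S \ U) :
    mrk L (X ∪ Y) = min (mrk L X + Y.ncard) (mrk L (S ∪ U)) := by
  have hSE := hS.subset_ground
  have hUE := hU.subset_ground
  have h₁ := hU.mrk_eq (X ∪ Y) (by grind)
  have h₂ := hS.mrk_eq (U ∪ Y) (by grind)
  rw [show (X ∪ Y) ∩ U = X by grind, show (X ∪ Y) \ U = Y by grind,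
    show X ∪ Y ∪ U = U ∪ Y by grind] at h₁
  rw [show (U ∪ Y) ∩ S = S ∩ U ∪ Y by grind, show (U ∪ Y) \ S = U \ S by grind,
    show U ∪ Y ∪ S = S ∪ U by grind] at h₂
  have hXY : mrk L (X ∪ Y) ≤ mrk L (S ∩ U ∪ Y) := mrk_mono (union_subset_union_left Y hX)
  have hX₁ : mrk L X ≤ mrk L (X ∪ Y) := mrk_mono subset_union_left
  have hX₂ : mrk L X ≤ mrk L (S ∪ U) :=
    mrk_mono (hX.trans (inter_subset_left.trans subset_union_left))
  -- If `U \ S = ∅` then `Y = ∅`; otherwise the term `mrk L (S ∩ U ∪ Y) + |U \ S|` that `h₂`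
  -- brings into `h₁` exceeds `mrk L (X ∪ Y)` and drops out of the minimum.
  have hYd : Y.ncard ≤ (U \ S).ncard := by
    rw [← ncard_sdiff_comm (L.set_finite S) (L.set_finite U) hcard]
    exact ncard_le_ncard hY (L.set_finite (S \ U) (sdiff_subset.trans hSE))
  omega

lemma mrk_union_union_union (hS : IsFreeFactor L S) (hU : IsFreeFactor L U)
    (hcard : S.ncard = U.ncard) (hX : X ⊆ S ∩ U) (hY : Y ⊆ S \ U) (hY' : Y' ⊆ U \ S)
    (hR : R ⊆ L.E \ (S ∪ U)) :
    mrk L (X ∪ Y ∪ Y' ∪ R) =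
      min (min (mrk L X + Y'.ncard) (mrk L (S ∪ U)) + Y.ncard + R.ncard)
        (min (min (mrk L (S ∩ U) + Y.ncard) (mrk L (S ∪ U)) + (U \ S).ncard + R.ncard)
          (mrk L (S ∪ U ∪ R))) := by
  have hSE := hS.subset_ground
  have hUE := hU.subset_ground
  have h₁ := hU.mrk_eq (X ∪ Y ∪ Y' ∪ R) (by grind)
  rw [show (X ∪ Y ∪ Y' ∪ R) ∩ U = X ∪ Y' by grind, show (X ∪ Y ∪ Y' ∪ R) \ U = Y ∪ R by grind,
    show X ∪ Y ∪ Y' ∪ R ∪ U = U ∪ Y ∪ R by grind,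
    hU.mrk_union_of_subset_sdiff hS hcard.symm (inter_comm S U ▸ hX) hY', union_comm U S,
    ncard_union_eq (by grind) (L.set_finite Y (by grind)) (L.set_finite R (by grind))] at h₁
  have h₂ := hS.mrk_eq (U ∪ Y ∪ R) (by grind)
  rw [show (U ∪ Y ∪ R) ∩ S = S ∩ U ∪ Y by grind, show (U ∪ Y ∪ R) \ S = U \ S ∪ R by grind,
    show U ∪ Y ∪ R ∪ S = S ∪ U ∪ R by grind,
    hS.mrk_union_of_subset_sdiff hU hcard subset_rfl hY,
    ncard_union_eq (by grind) (L.set_finite (U \ S) (by grind)) (L.set_finite R (by grind))] at h₂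
  rw [h₁, h₂]
  omega

lemma mrk_exchange (hS : IsFreeFactor L S) (hU : IsFreeFactor L U) (hcard : S.ncard = U.ncard)
    (hX : X ⊆ S ∩ U) (hY : Y ⊆ S \ U) (hY' : Y' ⊆ U \ S) (hR : R ⊆ L.E \ (S ∪ U))
    (hZ : Z ⊆ U \ S) (hZ' : Z' ⊆ S \ U) (hYZ : Y.ncard = Z.ncard) (hYZ' : Y'.ncard = Z'.ncard) :
    mrk L (X ∪ Y ∪ Y' ∪ R) = mrk L (X ∪ Z ∪ Z' ∪ R) := by
  rw [hS.mrk_union_union_union hU hcard hX hY hY' hR,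
    hU.mrk_union_union_union hS hcard.symm (inter_comm S U ▸ hX) hZ hZ' (union_comm S U ▸ hR),
    inter_comm U S, union_comm U S, hYZ, hYZ',
    ncard_sdiff_comm (L.set_finite S hS.subset_ground) (L.set_finite U hU.subset_ground) hcard]

lemma exists_isIsoMap_image_eq (hS : IsFreeFactor L S) (hU : IsFreeFactor L U)
    (hcard : S.ncard = U.ncard) : ∃ σ : α → α, IsIsoMap σ L L ∧ σ '' S = U := by
  have hSE := hS.subset_ground
  have hUE := hU.subset_ground
  obtain ⟨σ, hσ, hσSU, hσUS, hσid⟩ := exists_involutive_swap (L.set_finite (S \ U) (by grind))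
    (L.set_finite (U \ S) (by grind)) disjoint_sdiff_sdiff
    (ncard_sdiff_comm (L.set_finite S) (L.set_finite U) hcard)
  have hdecomp (X : Set α) : X ∩ (S ∩ U) ∪ X ∩ (S \ U) ∪ X ∩ (U \ S) ∪ X \ (S ∪ U) = X := by
    grind
  have himage (X : Set α) : σ '' X =
      X ∩ (S ∩ U) ∪ σ '' (X ∩ (S \ U)) ∪ σ '' (X ∩ (U \ S)) ∪ X \ (S ∪ U) := by
    conv_lhs => rw [← hdecomp X]
    rw [image_union, image_union, image_union,
      (hσid.mono (show X ∩ (S ∩ U) ⊆ _ by grind)).image_eq_self,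
      (hσid.mono (show X \ (S ∪ U) ⊆ _ by grind)).image_eq_self]
  have hSU (X : Set α) : σ '' (X ∩ (S \ U)) ⊆ U \ S :=
    (hσSU.mono_left inter_subset_right).image_subset
  have hUS (X : Set α) : σ '' (X ∩ (U \ S)) ⊆ S \ U :=
    (hσUS.mono_left inter_subset_right).image_subset
  have hmaps : MapsTo σ L.E L.E := by
    rw [mapsTo_iff_image_subset, himage]
    have := hSU L.E
    have := hUS L.E
    grind
  have hmrk : ∀ X ⊆ L.E, mrk L (σ '' X) = mrk L X := fun X hX => by
    rw [himage]
    conv_rhs => rw [← hdecomp X]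
    exact (hS.mrk_exchange hU hcard inter_subset_right inter_subset_right inter_subset_right
      (sdiff_subset_sdiff_left hX) (hSU X) (hUS X) (ncard_image_of_injective _ hσ.injective).symm
      (ncard_image_of_injective _ hσ.injective).symm).symm
  refine ⟨σ, ⟨⟨hmaps, hσ.injective.injOn, fun y hy => ⟨σ y, hmaps hy, hσ y⟩⟩, fun I hI => ?_⟩, ?_⟩
  · rw [indep_iff_mrk_eq_ncard hI, indep_iff_mrk_eq_ncard ((hmaps.mono_left hI).image_subset),
      hmrk I hI, ncard_image_of_injective I hσ.injective]
  have hσSU' : σ '' (S \ U) = U \ S :=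
    hσSU.image_subset.antisymm fun y hy => ⟨σ y, hσUS hy, hσ y⟩
  calc σ '' S = σ '' (S ∩ U) ∪ σ '' (S \ U) := by rw [← image_union, inter_union_sdiff]
    _ = S ∩ U ∪ U \ S := by rw [(hσid.mono (show S ∩ U ⊆ _ by grind)).image_eq_self, hσSU']
    _ = U := by rw [inter_comm, inter_union_sdiff]

end IsFreeFactor

lemma IsIsoMap.isFreeFactor_preimage {L : Matroid α} {L' : Matroid β} [L.Finite] [L'.Finite]
    {f : α → β} {U : Set β} (hf : IsIsoMap f L L') (hU : IsFreeFactor L' U) :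
    IsFreeFactor L (L.E ∩ f ⁻¹' U) := by
  set U₀ := L.E ∩ f ⁻¹' U
  have hU₀ : f '' U₀ = U := hf.image_inter_preimage hU.subset_ground
  refine ⟨inter_subset_left, fun X hX => ?_⟩
  have hinj := hf.bijOn.injOn
  have hinter : f '' (X ∩ U₀) = f '' X ∩ U := by
    rw [hinj.image_inter hX inter_subset_left, hU₀]
  have hsdiff : f '' (X \ U₀) = f '' X \ U := by
    rw [← sdiff_self_inter, (hinj.mono hX).image_sdiff_subset inter_subset_left, hinter,
      sdiff_self_inter]
  rw [← hf.mrk_image hX, hU.mrk_eq _ (hf.bijOn.mapsTo.mono_left hX).image_subset, ← hinter,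
    ← hsdiff, ← hU₀, ← image_union, hf.mrk_image (inter_subset_left.trans hX),
    hf.mrk_image (union_subset hX inter_subset_left),
    (hinj.mono (sdiff_subset.trans hX)).ncard_image]

structure IsFreeProduct (L M N : Matroid α) : Prop where
  disjoint : Disjoint M.E N.E
  ground_eq : L.E = M.E ∪ N.E
  indep_iff : ∀ A, L.Indep A ↔ A ⊆ M.E ∪ N.E ∧ M.Indep (A ∩ M.E) ∧
    (A ∩ N.E).ncard - mrk N (A ∩ N.E) ≤ mrk M M.E - mrk M (A ∩ M.E)

namespace IsFreeProduct

variable {L M N : Matroid α} {I X Y Z : Set α}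

lemma sdiff_eq (h : IsFreeProduct L M N) : L.E \ M.E = N.E := by
  rw [h.ground_eq, union_sdiff_cancel_left h.disjoint.inter_eq.subset]

variable [M.Finite] [N.Finite]

protected lemma finite (h : IsFreeProduct L M N) : L.Finite :=
  ⟨h.ground_eq ▸ M.ground_finite.union N.ground_finite⟩

lemma ncard_eq_add (h : IsFreeProduct L M N) (hX : X ⊆ L.E) :
    X.ncard = (X ∩ M.E).ncard + (X ∩ N.E).ncard := by
  rw [← ncard_union_eq (h.disjoint.mono inter_subset_right inter_subset_right)
    (M.set_finite _ inter_subset_right) (N.set_finite _ inter_subset_right),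
    ← inter_union_distrib_left, inter_eq_left.mpr (h.ground_eq ▸ hX)]

lemma ncard_le_of_indep (h : IsFreeProduct L M N) (hI : L.Indep I) :
    I.ncard ≤ min (mrk M (I ∩ M.E) + (I ∩ N.E).ncard) (mrk M M.E + mrk N (I ∩ N.E)) := by
  obtain ⟨-, hIM, hlack⟩ := (h.indep_iff I).mp hI
  have hsplit := h.ncard_eq_add hI.subset_ground
  have hrkM := (indep_iff_mrk_eq_ncard hIM.subset_ground).mp hIM
  have := mrk_le_mrk_ground (M := M) (I ∩ M.E)
  have := mrk_le_ncard (M := N) (N.set_finite (I ∩ N.E) inter_subset_right)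
  omega

lemma exists_indep (h : IsFreeProduct L M N) (X : Set α) : ∃ I ⊆ X, L.Indep I ∧
    I.ncard = min (mrk M (X ∩ M.E) + (X ∩ N.E).ncard) (mrk M M.E + mrk N (X ∩ N.E)) := by
  obtain ⟨B, hBX, hB, hBcard⟩ := exists_indep_subset_ncard_eq_mrk M (X ∩ M.E)
  obtain ⟨J₀, hJ₀X, hJ₀, hJ₀card⟩ := exists_indep_subset_ncard_eq_mrk N (X ∩ N.E)
  have hXN := mrk_le_ncard (M := N) (N.set_finite (X ∩ N.E) inter_subset_right)
  have hXM := mrk_le_mrk_ground (M := M) (X ∩ M.E)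
  -- enlarge `J₀` inside `X ∩ N.E` as far as the rank-lack of `B` allows
  obtain ⟨J, hJ₀J, hJX, hJcard⟩ := exists_subsuperset_card_eq hJ₀X
    (n := min (X ∩ N.E).ncard (mrk N (X ∩ N.E) + (mrk M M.E - mrk M (X ∩ M.E))))
    (by omega) (min_le_left _ _)
  have hBM : B ⊆ M.E := hBX.trans inter_subset_right
  have hJN : J ⊆ N.E := hJX.trans inter_subset_right
  have hJrk : mrk N J = mrk N (X ∩ N.E) :=
    (mrk_mono hJX).antisymm (hJ₀card ▸ hJ₀.ncard_le_mrk hJ₀J)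
  have hBJM : (B ∪ J) ∩ M.E = B := by
    have := h.disjoint
    grind
  have hBJN : (B ∪ J) ∩ N.E = J := by
    have := h.disjoint
    grind
  refine ⟨B ∪ J, union_subset (hBX.trans inter_subset_left) (hJX.trans inter_subset_left), ?_, ?_⟩
  · rw [h.indep_iff, hBJM, hBJN, hJrk, (indep_iff_mrk_eq_ncard hBM).mp hB]
    exact ⟨union_subset_union hBM hJN, hB, by omega⟩
  · rw [ncard_union_eq (h.disjoint.mono hBM hJN) (M.set_finite B) (N.set_finite J)]
    omega

lemma mrk_eq (h : IsFreeProduct L M N) (X : Set α) :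
    mrk L X = min (mrk M (X ∩ M.E) + (X ∩ N.E).ncard) (mrk M M.E + mrk N (X ∩ N.E)) := by
  have := h.finite
  obtain ⟨I, hIX, hI, hIcard⟩ := exists_indep_subset_ncard_eq_mrk L X
  obtain ⟨J, hJX, hJ, hJcard⟩ := h.exists_indep X
  have := h.ncard_le_of_indep hI
  have := mrk_mono (M := M) (inter_subset_inter_left M.E hIX)
  have := mrk_mono (M := N) (inter_subset_inter_left N.E hIX)
  have := ncard_le_ncard (inter_subset_inter_left N.E hIX)
    (N.set_finite (X ∩ N.E) inter_subset_right)
  have := hJ.ncard_le_mrk hJX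
  omega

lemma mrk_eq_of_subset_left (h : IsFreeProduct L M N) (hY : Y ⊆ M.E) : mrk L Y = mrk M Y := by
  rw [h.mrk_eq, inter_eq_left.mpr hY, (h.disjoint.mono_left hY).inter_eq, ncard_empty, add_zero]
  exact min_eq_left ((mrk_le_mrk_ground Y).trans (Nat.le_add_right _ _))

lemma mrk_union_of_subset_right (h : IsFreeProduct L M N) (hZ : Z ⊆ N.E) :
    mrk L (M.E ∪ Z) = mrk M M.E + mrk N Z := by
  rw [h.mrk_eq, union_inter_cancel_left, union_inter_distrib_right, h.disjoint.inter_eq,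
    empty_union, inter_eq_left.mpr hZ]
  exact min_eq_right (Nat.add_le_add_left (mrk_le_ncard (N.set_finite Z)) _)

lemma indep_iff_of_subset_left (h : IsFreeProduct L M N) (hI : I ⊆ M.E) :
    L.Indep I ↔ M.Indep I := by
  have := h.finite
  rw [indep_iff_mrk_eq_ncard (h.ground_eq ▸ hI.trans subset_union_left),
    indep_iff_mrk_eq_ncard hI, h.mrk_eq_of_subset_left hI]

lemma right_indep_iff (h : IsFreeProduct L M N) (hZ : Z ⊆ N.E) :
    N.Indep Z ↔ mrk L (M.E ∪ Z) = mrk L M.E + Z.ncard := by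
  rw [indep_iff_mrk_eq_ncard hZ, h.mrk_union_of_subset_right hZ,
    h.mrk_eq_of_subset_left subset_rfl]
  omega

lemma isFreeFactor (h : IsFreeProduct L M N) : IsFreeFactor L M.E := by
  refine ⟨h.ground_eq ▸ subset_union_left, fun X hX => ?_⟩
  have hXN : X \ M.E = X ∩ N.E := by
    have := h.disjoint
    rw [h.ground_eq] at hX
    grind
  rw [hXN, union_comm, ← union_sdiff_self, hXN, h.mrk_eq_of_subset_left inter_subset_right,
    h.mrk_union_of_subset_right inter_subset_right, h.mrk_eq]

variable {L' P Q : Matroid β} [P.Finite] [Q.Finite]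

theorem matroidIso_of_isIsoMap (hL : IsFreeProduct L M N) (hL' : IsFreeProduct L' P Q)
    {f : α → β} (hf : IsIsoMap f L L') (hfM : f '' M.E = P.E) :
    MatroidIso M P ∧ MatroidIso N Q := by
  have := hL.finite
  have := hL'.finite
  have hM : M.E ⊆ L.E := hL.ground_eq ▸ subset_union_left
  have hN : N.E ⊆ L.E := hL.ground_eq ▸ subset_union_right
  have hinj := hf.bijOn.injOn
  have hfN : f '' N.E = Q.E := by
    rw [← hL.sdiff_eq, hinj.image_sdiff_subset hM, hf.bijOn.image_eq, hfM, hL'.sdiff_eq]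
  refine ⟨IsIsoMap.matroidIso ⟨hfM ▸ (hinj.mono hM).bijOn_image, fun I hI => ?_⟩,
    IsIsoMap.matroidIso ⟨hfN ▸ (hinj.mono hN).bijOn_image, fun Z hZ => ?_⟩⟩
  · rw [← hL.indep_iff_of_subset_left hI, hf.indep_iff I (hI.trans hM),
      hL'.indep_iff_of_subset_left (hfM ▸ image_mono hI)]
  · rw [hL.right_indep_iff hZ, hL'.right_indep_iff (hfN ▸ image_mono hZ),
      ← hfM, ← image_union, hf.mrk_image (union_subset hM (hZ.trans hN)), hf.mrk_image hM,
      (hinj.mono (hZ.trans hN)).ncard_image]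

theorem matroidIso_of_matroidIso (hL : IsFreeProduct L M N) (hL' : IsFreeProduct L' P Q)
    (hcard : M.E.ncard = P.E.ncard) (h : MatroidIso L L') :
    MatroidIso M P ∧ MatroidIso N Q := by
  -- `h` becomes a map `α → β` only when `β` is inhabited
  rcases isEmpty_or_nonempty β with hβ | hβ
  · have hE : M.E ∪ N.E = ∅ := hL.ground_eq ▸ h.ground_eq_empty
    rw [union_empty_iff] at hE
    exact ⟨matroidIso_of_isEmpty hE.1, matroidIso_of_isEmpty hE.2⟩
  have := hL.finite
  have := hL'.finite
  obtain ⟨f, hf⟩ := h.exists_isIsoMap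
  have hfU : f '' (L.E ∩ f ⁻¹' P.E) = P.E :=
    hf.image_inter_preimage (hL'.ground_eq ▸ subset_union_left)
  obtain ⟨σ, hσ, hσM⟩ := hL.isFreeFactor.exists_isIsoMap_image_eq
    (hf.isFreeFactor_preimage hL'.isFreeFactor)
    (by rw [hcard, ← (hf.bijOn.injOn.mono inter_subset_left).ncard_image, hfU])
  exact hL.matroidIso_of_isIsoMap hL' (hf.comp hσ) (by rw [image_comp, hσM, hfU])

end IsFreeProduct

end

/-- **Corollary 7.** If `M □ N ≅ P □ Q` and `|S| = |U|` (where `S`, `U` are the ground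
sets of `M`, `P`), then `M ≅ P` and `N ≅ Q`. -/
theorem stmt_14 {α β : Type*} (M N : Matroid α) (P Q : Matroid β)
    (S T : Set α) (U V : Set β)
    (hS : S.Finite) (hT : T.Finite) (hU : U.Finite) (hV : V.Finite)
    (hMS : M.E = S) (hNT : N.E = T) (hPU : P.E = U) (hQV : Q.E = V)
    (hST : Disjoint S T) (hUV : Disjoint U V)
    (L : Matroid α) (hLE : L.E = S ∪ T)
    (hLI : ∀ A : Set α, L.Indep A ↔ A ⊆ S ∪ T ∧ M.Indep (A ∩ S) ∧
      (A ∩ T).ncard - mrk N (A ∩ T) ≤ mrk M S - mrk M (A ∩ S))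
    (L' : Matroid β) (hL'E : L'.E = U ∪ V)
    (hL'I : ∀ A : Set β, L'.Indep A ↔ A ⊆ U ∪ V ∧ P.Indep (A ∩ U) ∧
      (A ∩ V).ncard - mrk Q (A ∩ V) ≤ mrk P U - mrk P (A ∩ U))
    (hcard : S.ncard = U.ncard)
    (hiso : MatroidIso L L') :
    MatroidIso M P ∧ MatroidIso N Q := by
  subst hMS hNT hPU hQV
  have : M.Finite := ⟨hS⟩
  have : N.Finite := ⟨hT⟩
  have : P.Finite := ⟨hU⟩
  have : Q.Finite := ⟨hV⟩
  exact IsFreeProduct.matroidIso_of_matroidIso ⟨hST, hLE, hLI⟩ ⟨hUV, hL'E, hL'I⟩ hcard hiso
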